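/- arXiv:1010.6066 — 2 statements merged into one kernel-verified Lean document; each statement's English description precedes it below -/
import Mathlib

section
/- Let K be an imaginary quadratic field with ring of integers R, ℓ a prime, c a positive integer coprime to ℓ, and n ≥ 1. Consider ℓ_n := ℓ·ℤ + cℓ^n·R (the ℤ-span of ℓ and cℓ^n·R inside K). Then: (i) ℓ_n = ℓ·𝒪_{cℓ^{n-1}}; (ii) ℓ_n is an ideal of the order 𝒪_{cℓ^n} and the quotient 𝒪_{cℓ^n}/ℓ_n has exactly ℓ elements, so ℓ_n is a maximal (hence prime) ideal of 𝒪_{cℓ^n}; and (iii) the multiplier ring R(ℓ_n) = {x ∈ K : x·ℓ_n ⊆ ℓ_n} equals 𝒪_{cℓ^{n-1}}, so ℓ_n is a proper 𝒪_{cℓ^{n-1}}-ideal but not a proper 𝒪_{cℓ^n}-ideal. -/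
set_option synthInstance.maxHeartbeats 1000000
set_option maxHeartbeats 1000000

open NumberField Pointwise

/-- The order of conductor `f` in a field `K`: the subring `ℤ + f·𝓞_K` of `K`,
generated over `ℤ` by the set `f • 𝓞_K` (whose `ℤ`-span together with `1` it equals). -/
noncomputable def ringOrder (K : Type*) [Field K] (f : ℕ) : Subalgebra ℤ K :=
  Algebra.adjoin ℤ ((f : K) • (integralClosure ℤ K : Set K))

/-- The `ℤ`-span of `ℓ` and `cℓ^n·𝓞_K` inside `K` (the ideal `ℓ_n` of the paper). -/
noncomputable def ellIdeal (K : Type*) [Field K] (ℓ c n : ℕ) : Submodule ℤ K :=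
  Submodule.span ℤ
    (insert ((ℓ : K)) (((c : K) * (ℓ : K) ^ n) • (integralClosure ℤ K : Set K)))

/-!
Write `R = 𝓞_K` and `f = cℓ^(n-1)`. Everything rests on the description `𝒪_f = ℤ + fR` and on
`ℚ ∩ R = ℤ`, which gives `ℤ ∩ FR = Fℤ` for every integer `F`. Then `ℓ_n = ℓℤ + ℓfR = ℓ𝒪_f`, and
the multiplier ring of `ℓ𝒪_f` is that of `𝒪_f`, namely `𝒪_f` itself. Every element of `𝒪_{fℓ}` is an integer modulo
`ℓ_n`, and the integers in `ℓ_n` are exactly `ℓℤ`, so `𝒪_{fℓ}/ℓ_n ≅ ℤ/ℓ`. Finally, `𝒪_f = 𝒪_{fℓ}`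
would force `R = ℤ + ℓR`, hence `R/ℓR ≅ ℤ/ℓ`, whereas `|R/ℓR| = N(ℓ) = ℓ^[K:ℚ] = ℓ²`.
-/

lemma dvd_of_intCast_eq_mul_of_isIntegral {K : Type*} [Field K] [CharZero K] {a F : ℤ} {r : K}
    (hr : IsIntegral ℤ r) (h : (a : K) = F * r) : F ∣ a := by
  rcases eq_or_ne F 0 with rfl | hF
  · simp_all
  have hr' : r = algebraMap ℚ K (a / F) := by
    rw [map_div₀, map_intCast, map_intCast, h, mul_div_cancel_left₀ _ (by exact_mod_cast hF)]
  rw [hr'] at hr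
  have hq : IsIntegral ℤ ((a : ℚ) / F) :=
    (isIntegral_algHom_iff ((Algebra.ofId ℚ K).restrictScalars ℤ) (algebraMap ℚ K).injective).mp hr
  obtain ⟨z, hz⟩ := IsIntegrallyClosed.isIntegral_iff.mp hq
  rw [algebraMap_int_eq, eq_intCast, eq_div_iff (by exact_mod_cast hF)] at hz
  exact ⟨z, by exact_mod_cast ((mul_comm _ _).trans hz).symm⟩

section SubalgebraIdeal

variable {R A : Type*} [CommRing R] [CommRing A] [Algebra R A]

lemma Subalgebra.setOf_mul_mem_smul_toSubmodule_eq [IsDomain A] (S : Subalgebra R A) {u : A}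
    (hu : u ≠ 0) :
    {x : A | ∀ y ∈ u • Subalgebra.toSubmodule S, x * y ∈ u • Subalgebra.toSubmodule S} = S := by
  ext x
  simp only [Set.mem_ofPred_eq, SetLike.mem_coe, Submodule.mem_smul_pointwise_iff_exists,
    Subalgebra.mem_toSubmodule, smul_eq_mul]
  constructor
  · intro hx
    obtain ⟨s, hs, hsx⟩ := hx u ⟨1, one_mem S, mul_one u⟩
    exact mul_left_cancel₀ hu (hsx.trans (mul_comm x u)) ▸ hs
  · rintro hx _ ⟨s, hs, rfl⟩
    exact ⟨x * s, mul_mem hx hs, by ring⟩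

def Subalgebra.idealOfMulMem (S : Subalgebra R A) (M : Submodule R A)
    (hM : ∀ x ∈ S, ∀ y ∈ M, x * y ∈ M) : Ideal S where
  carrier := {x | (x : A) ∈ M}
  add_mem' := M.add_mem
  zero_mem' := zero_mem M
  smul_mem' x _ hy := hM x x.2 _ hy

@[simp]
lemma Subalgebra.mem_idealOfMulMem {S : Subalgebra R A} {M : Submodule R A}
    {hM : ∀ x ∈ S, ∀ y ∈ M, x * y ∈ M} {x : S} : x ∈ S.idealOfMulMem M hM ↔ (x : A) ∈ M :=
  Iff.rfl

lemma Subalgebra.image_idealOfMulMem (S : Subalgebra R A) (M : Submodule R A)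
    (hM : ∀ x ∈ S, ∀ y ∈ M, x * y ∈ M) (hMS : M ≤ Subalgebra.toSubmodule S) :
    Subtype.val '' (S.idealOfMulMem M hM : Set S) = M := by
  ext x
  exact ⟨fun ⟨y, hy, hyx⟩ => hyx ▸ hy, fun hx => ⟨⟨x, hMS hx⟩, hx, rfl⟩⟩

end SubalgebraIdeal

noncomputable def Ideal.quotientEquivZMod {S : Type*} [CommRing S] (I : Ideal S) (ℓ : ℕ)
    (hsurj : ∀ x : S, ∃ a : ℤ, x - a ∈ I) (hker : ∀ a : ℤ, (a : S) ∈ I ↔ (ℓ : ℤ) ∣ a) :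
    S ⧸ I ≃+* ZMod ℓ :=
  have hf : Function.Surjective (algebraMap ℤ (S ⧸ I)) := fun y => by
    obtain ⟨x, rfl⟩ := Ideal.Quotient.mk_surjective y
    obtain ⟨a, ha⟩ := hsurj x
    refine ⟨a, ?_⟩
    rw [eq_intCast, ← map_intCast (Ideal.Quotient.mk I)]
    exact (Ideal.Quotient.eq.mpr ha).symm
  have hk : RingHom.ker (algebraMap ℤ (S ⧸ I)) = Ideal.span {(ℓ : ℤ)} := by
    ext a
    rw [RingHom.mem_ker, eq_intCast, ← map_intCast (Ideal.Quotient.mk I),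
      Ideal.Quotient.eq_zero_iff_mem, hker, Ideal.mem_span_singleton]
  (RingHom.quotientKerEquivOfSurjective hf).symm.trans
    ((Ideal.quotEquivOfEq hk).trans (Int.quotientSpanNatEquivZMod ℓ))

section Orders

variable {K : Type*} [Field K]

lemma mem_ringOrder_iff (f : ℕ) (x : K) :
    x ∈ ringOrder K f ↔ ∃ a : ℤ, ∃ r ∈ integralClosure ℤ K, x = a + f * r := by
  constructor
  · intro hx
    induction hx using Algebra.adjoin_induction with
    | mem x hx =>
      obtain ⟨r, hr, rfl⟩ := hx
      exact ⟨0, r, hr, by simp⟩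
    | algebraMap a => exact ⟨a, 0, zero_mem _, by simp⟩
    | add x y _ _ hx hy =>
      obtain ⟨a, r, hr, rfl⟩ := hx
      obtain ⟨b, s, hs, rfl⟩ := hy
      exact ⟨a + b, r + s, add_mem hr hs, by push_cast; ring⟩
    | mul x y _ _ hx hy =>
      obtain ⟨a, r, hr, rfl⟩ := hx
      obtain ⟨b, s, hs, rfl⟩ := hy
      have hmem : (a : K) * s + b * r + f * r * s ∈ integralClosure ℤ K :=
        add_mem (add_mem (mul_mem (intCast_mem _ a) hs) (mul_mem (intCast_mem _ b) hr))
          (mul_mem (mul_mem (natCast_mem _ f) hr) hs)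
      exact ⟨a * b, _, hmem, by push_cast; ring⟩
  · rintro ⟨a, r, hr, rfl⟩
    exact add_mem (intCast_mem _ a) (Algebra.subset_adjoin (Set.smul_mem_smul_set hr))

lemma ringOrder_mono {f g : ℕ} (h : f ∣ g) : ringOrder K g ≤ ringOrder K f := by
  obtain ⟨k, rfl⟩ := h
  intro x hx
  obtain ⟨a, r, hr, rfl⟩ := (mem_ringOrder_iff _ x).mp hx
  exact (mem_ringOrder_iff f _).mpr ⟨a, k * r, mul_mem (natCast_mem _ k) hr, by push_cast; ring⟩

lemma mem_ellIdeal_iff (ℓ c n : ℕ) (x : K) :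
    x ∈ ellIdeal K ℓ c n ↔
      ∃ a : ℤ, ∃ r ∈ integralClosure ℤ K, x = a * ℓ + c * ℓ ^ n * r := by
  have hspan : Submodule.span ℤ (((c : K) * (ℓ : K) ^ n) • (integralClosure ℤ K : Set K)) =
      ((c : K) * (ℓ : K) ^ n) • Subalgebra.toSubmodule (integralClosure ℤ K) := by
    rw [← Submodule.span_eq (_ • Subalgebra.toSubmodule _), Submodule.coe_pointwise_smul]
    rfl
  simp only [ellIdeal, Submodule.mem_span_insert, hspan, Submodule.mem_smul_pointwise_iff_exists,
    Subalgebra.mem_toSubmodule, zsmul_eq_mul, smul_eq_mul]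
  constructor
  · rintro ⟨a, _, ⟨r, hr, rfl⟩, rfl⟩
    exact ⟨a, r, hr, rfl⟩
  · rintro ⟨a, r, hr, rfl⟩
    exact ⟨a, _, ⟨r, hr, rfl⟩, rfl⟩

lemma ellIdeal_eq_smul_ringOrder (ℓ c m : ℕ) :
    ellIdeal K ℓ c (m + 1) = (ℓ : K) • Subalgebra.toSubmodule (ringOrder K (c * ℓ ^ m)) := by
  ext x
  simp only [mem_ellIdeal_iff, Submodule.mem_smul_pointwise_iff_exists, Subalgebra.mem_toSubmodule,
    mem_ringOrder_iff, smul_eq_mul]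
  constructor
  · rintro ⟨a, r, hr, rfl⟩
    exact ⟨_, ⟨a, r, hr, rfl⟩, by push_cast; ring⟩
  · rintro ⟨_, ⟨a, r, hr, rfl⟩, rfl⟩
    exact ⟨a, r, hr, by push_cast; ring⟩

lemma ellIdeal_le_ringOrder (ℓ c n : ℕ) :
    ellIdeal K ℓ c n ≤ Subalgebra.toSubmodule (ringOrder K (c * ℓ ^ n)) := by
  intro x hx
  obtain ⟨a, r, hr, rfl⟩ := (mem_ellIdeal_iff ℓ c n x).mp hx
  exact (mem_ringOrder_iff _ _).mpr ⟨a * ℓ, r, hr, by push_cast; ring⟩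

lemma exists_sub_intCast_mem_ellIdeal (ℓ c n : ℕ) {x : K}
    (hx : x ∈ ringOrder K (c * ℓ ^ n)) : ∃ a : ℤ, x - a ∈ ellIdeal K ℓ c n := by
  obtain ⟨a, r, hr, rfl⟩ := (mem_ringOrder_iff _ x).mp hx
  exact ⟨a, (mem_ellIdeal_iff ℓ c n _).mpr ⟨0, r, hr, by push_cast; ring⟩⟩

lemma intCast_mem_ellIdeal_iff [CharZero K] (ℓ c : ℕ) {n : ℕ} (hn : n ≠ 0) (a : ℤ) :
    (a : K) ∈ ellIdeal K ℓ c n ↔ (ℓ : ℤ) ∣ a := by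
  rw [mem_ellIdeal_iff]
  constructor
  · rintro ⟨b, r, hr, h⟩
    have hcr : ((a - b * ℓ : ℤ) : K) = ((c * ℓ ^ n : ℕ) : ℤ) * r := by push_cast; rw [h]; ring
    have hℓF : (ℓ : ℤ) ∣ ((c * ℓ ^ n : ℕ) : ℤ) :=
      Int.natCast_dvd_natCast.mpr (dvd_mul_of_dvd_right (dvd_pow_self ℓ hn) c)
    have := dvd_add (hℓF.trans (dvd_of_intCast_eq_mul_of_isIntegral hr hcr)) (dvd_mul_left _ b)
    rwa [sub_add_cancel] at this
  · rintro ⟨b, rfl⟩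
    exact ⟨b, 0, zero_mem _, by push_cast; ring⟩

end Orders

lemma NumberField.RingOfIntegers.intCast_mem_span_natCast_iff {K : Type*} [Field K] [CharZero K]
    (ℓ : ℕ) (a : ℤ) :
    (a : 𝓞 K) ∈ Ideal.span {(ℓ : 𝓞 K)} ↔ (ℓ : ℤ) ∣ a := by
  rw [Ideal.mem_span_singleton']
  constructor
  · rintro ⟨s, hs⟩
    refine dvd_of_intCast_eq_mul_of_isIntegral (RingOfIntegers.isIntegral_coe s) (K := K) ?_
    have := congrArg (algebraMap (𝓞 K) K) hs
    rw [map_mul, map_natCast, map_intCast] at this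
    rw [← this, mul_comm, Int.cast_natCast]
  · rintro ⟨b, rfl⟩
    exact ⟨b, by push_cast; ring⟩

section NumberField

variable {K : Type*} [Field K] [NumberField K]

lemma ringOrder_ne_ringOrder_mul (hK : 1 < Module.finrank ℚ K) {f ℓ : ℕ} (hf : f ≠ 0)
    (hℓ : 1 < ℓ) : (ringOrder K f : Set K) ≠ ringOrder K (f * ℓ) := by
  intro h
  have hsurj : ∀ r : 𝓞 K, ∃ a : ℤ, r - a ∈ Ideal.span {(ℓ : 𝓞 K)} := by
    intro r
    have hr : (f * r : K) ∈ (ringOrder K (f * ℓ) : Set K) :=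
      h ▸ (mem_ringOrder_iff f _).mpr ⟨0, r, r.2, by simp⟩
    obtain ⟨a, s, hs, hfr⟩ := (mem_ringOrder_iff _ _).mp hr
    obtain ⟨s, rfl⟩ : ∃ t : 𝓞 K, (t : K) = s := ⟨⟨s, hs⟩, rfl⟩
    obtain ⟨z, rfl⟩ : (f : ℤ) ∣ a := by
      refine dvd_of_intCast_eq_mul_of_isIntegral (r := (r : K) - ℓ * s)
        (sub_mem r.2 (mul_mem (natCast_mem _ ℓ) s.2) : _ ∈ integralClosure ℤ K) ?_
      push_cast at hfr ⊢
      linear_combination -hfr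
    refine ⟨z, Ideal.mem_span_singleton'.mpr ⟨s, RingOfIntegers.coe_injective ?_⟩⟩
    rw [map_mul, map_sub, map_natCast, map_intCast, ← RingOfIntegers.coe_eq_algebraMap,
      ← RingOfIntegers.coe_eq_algebraMap]
    push_cast at hfr
    apply mul_left_cancel₀ (Nat.cast_ne_zero.mpr hf : (f : K) ≠ 0)
    linear_combination -hfr
  have hcard := Nat.card_congr
    (Ideal.quotientEquivZMod _ ℓ hsurj (RingOfIntegers.intCast_mem_span_natCast_iff ℓ)).toEquiv
  rw [Nat.card_zmod, ← Submodule.cardQuot_apply, ← Ideal.absNorm_apply,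
    Ideal.absNorm_span_natCast, RingOfIntegers.rank] at hcard
  have := Nat.pow_right_injective hℓ (hcard.trans (pow_one ℓ).symm)
  omega

end NumberField

theorem stmt4_general (K : Type*) [Field K] [NumberField K]
    (hdeg : Module.finrank ℚ K = 2)
    (ℓ : ℕ) (hℓ : ℓ.Prime) (c : ℕ) (hc : 0 < c)
    (n : ℕ) (hn : 1 ≤ n) :
    -- (i) ℓ_n = ℓ · 𝒪_{cℓ^{n-1}}
    ellIdeal K ℓ c n =
      (ℓ : K) • Subalgebra.toSubmodule (ringOrder K (c * ℓ ^ (n - 1))) ∧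
    -- (ii) ℓ_n is an ideal of 𝒪_{cℓ^n}, with quotient of cardinality ℓ, and maximal
    (∃ I : Ideal ↥(ringOrder K (c * ℓ ^ n)),
      Subtype.val '' (I : Set ↥(ringOrder K (c * ℓ ^ n))) = (ellIdeal K ℓ c n : Set K) ∧
      Nat.card (↥(ringOrder K (c * ℓ ^ n)) ⧸ I) = ℓ ∧
      I.IsMaximal) ∧
    -- (iii) the multiplier ring of ℓ_n is 𝒪_{cℓ^{n-1}}, which differs from 𝒪_{cℓ^n}
    {x : K | ∀ y ∈ ellIdeal K ℓ c n, x * y ∈ ellIdeal K ℓ c n} =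
      (ringOrder K (c * ℓ ^ (n - 1)) : Set K) ∧
    (ringOrder K (c * ℓ ^ (n - 1)) : Set K) ≠ (ringOrder K (c * ℓ ^ n) : Set K) := by
  obtain ⟨m, rfl⟩ := Nat.exists_eq_add_of_le' hn
  rw [Nat.add_sub_cancel]
  have hsmul := ellIdeal_eq_smul_ringOrder (K := K) ℓ c m
  have hmult := (ringOrder K (c * ℓ ^ m)).setOf_mul_mem_smul_toSubmodule_eq
    (Nat.cast_ne_zero.mpr hℓ.ne_zero)
  rw [← hsmul] at hmult
  have hstable : ∀ x ∈ ringOrder K (c * ℓ ^ (m + 1)), ∀ y ∈ ellIdeal K ℓ c (m + 1),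
      x * y ∈ ellIdeal K ℓ c (m + 1) := fun x hx =>
    hmult.ge (ringOrder_mono (mul_dvd_mul_left c (pow_dvd_pow ℓ m.le_succ)) hx)
  set I := (ringOrder K (c * ℓ ^ (m + 1))).idealOfMulMem _ hstable
  have e : _ ⧸ I ≃+* ZMod ℓ := I.quotientEquivZMod ℓ
    (fun x => exists_sub_intCast_mem_ellIdeal ℓ c (m + 1) x.2)
    (fun a => Subalgebra.mem_idealOfMulMem.trans (by
      push_cast; exact intCast_mem_ellIdeal_iff ℓ c m.succ_ne_zero a))
  have := Fact.mk hℓ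
  refine ⟨hsmul, ⟨I, Subalgebra.image_idealOfMulMem _ _ _ (ellIdeal_le_ringOrder ℓ c _),
    by rw [Nat.card_congr e.toEquiv, Nat.card_zmod],
    Ideal.Quotient.maximal_of_isField I (e.toMulEquiv.isField (Field.toIsField _))⟩, hmult, ?_⟩
  rw [pow_succ, ← mul_assoc]
  exact ringOrder_ne_ringOrder_mul (by omega) (mul_ne_zero hc.ne' (pow_ne_zero _ hℓ.ne_zero))
    hℓ.one_lt

theorem stmt4 (K : Type*) [Field K] [NumberField K]
    (hdeg : Module.finrank ℚ K = 2)
    (himag : IsEmpty (K →+* ℝ))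
    (ℓ : ℕ) (hℓ : ℓ.Prime) (c : ℕ) (hc : 0 < c) (hcop : Nat.Coprime c ℓ)
    (n : ℕ) (hn : 1 ≤ n) :
    -- (i) ℓ_n = ℓ · 𝒪_{cℓ^{n-1}}
    ellIdeal K ℓ c n =
      (ℓ : K) • Subalgebra.toSubmodule (ringOrder K (c * ℓ ^ (n - 1))) ∧
    -- (ii) ℓ_n is an ideal of 𝒪_{cℓ^n}, with quotient of cardinality ℓ, and maximal
    (∃ I : Ideal ↥(ringOrder K (c * ℓ ^ n)),
      Subtype.val '' (I : Set ↥(ringOrder K (c * ℓ ^ n))) = (ellIdeal K ℓ c n : Set K) ∧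
      Nat.card (↥(ringOrder K (c * ℓ ^ n)) ⧸ I) = ℓ ∧
      I.IsMaximal) ∧
    -- (iii) the multiplier ring of ℓ_n is 𝒪_{cℓ^{n-1}}, which differs from 𝒪_{cℓ^n}
    {x : K | ∀ y ∈ ellIdeal K ℓ c n, x * y ∈ ellIdeal K ℓ c n} =
      (ringOrder K (c * ℓ ^ (n - 1)) : Set K) ∧
    (ringOrder K (c * ℓ ^ (n - 1)) : Set K) ≠ (ringOrder K (c * ℓ ^ n) : Set K) :=
  stmt4_general K hdeg ℓ hℓ c hc n hn
end

section
/- Let p and ℓ be distinct primes with ℓ odd, and let F be a finite field of characteristic p such that ℓ^s is the exact power of ℓ dividing |F| − 1 for some integer s ≥ 1 (equivalently, the group of ℓ-power-order roots of unity in F^× has order exactly ℓ^s). Let E/F be an extension of finite fields of degree ℓ^t with t ≥ 0. Then for every element u ∈ E^× whose multiplicative order is a power of ℓ: the field trace Tr_{E/F}(u) equals ℓ^t·u if u ∈ F, and Tr_{E/F}(u) = 0 if u ∉ F. -/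
/-!
Write `q = |F|` and `v = v_ℓ(q - 1) ≥ 1`. If `u` has order `ℓ ^ j` and `u ∉ F`, then `j > v`.
By lifting the exponent, some `q ^ m - 1` has `ℓ`-adic valuation exactly `j - 1`, so the Galois
conjugate `u ^ (q ^ m)` equals `ζ * u` with `ζ = u ^ (q ^ m - 1)` a nontrivial `ℓ`-th root of unity.
Since `ℓ ∣ q - 1`, `ζ` lies in `F`, so `Tr u = Tr (ζ * u) = ζ * Tr u` forces `Tr u = 0`.
-/

theorem exists_padicValNat_pow_sub_one_eq {ℓ q n : ℕ} (hℓ : ℓ.Prime) (hodd : Odd ℓ) (hq : 1 < q)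
    (hℓq : ℓ ∣ q - 1) (hn : padicValNat ℓ (q - 1) ≤ n) :
    ∃ m, padicValNat ℓ (q ^ m - 1) = n := by
  have : Fact ℓ.Prime := ⟨hℓ⟩
  have hℓq' : ¬ ℓ ∣ q := fun h =>
    hℓ.one_lt.ne' (Nat.dvd_one.mp (by simpa [Nat.sub_sub_self hq.le] using Nat.dvd_sub h hℓq))
  refine ⟨ℓ ^ (n - padicValNat ℓ (q - 1)), ?_⟩
  have hlte := padicValNat.pow_sub_pow hodd hq (by simpa using hℓq) hℓq'
    (pow_ne_zero (n - padicValNat ℓ (q - 1)) hℓ.ne_zero)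
  rw [one_pow] at hlte
  rw [hlte, padicValNat.prime_pow]
  omega

namespace FiniteField

variable {F E : Type*} [Field F] [Field E] [Algebra F E] [Fintype F] [Finite E]

theorem trace_pow_card_pow (x : E) (m : ℕ) :
    Algebra.trace F E (x ^ Fintype.card F ^ m) = Algebra.trace F E x := by
  rw [← Algebra.trace_eq_of_algEquiv (frobeniusAlgEquivOfAlgebraic F E ^ m) x, AlgEquiv.coe_pow,
    coe_frobeniusAlgEquivOfAlgebraic_iterate]

theorem mem_range_algebraMap_of_pow_card_eq {x : E} (hx : x ^ Fintype.card F = x) :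
    x ∈ Set.range (algebraMap F E) := by
  rw [← IntermediateField.mem_bot, IsGalois.mem_bot_iff_fixed]
  intro σ
  obtain ⟨n, rfl⟩ := (bijective_frobeniusAlgEquivOfAlgebraic_pow F E).2 σ
  rw [AlgEquiv.coe_pow, coe_frobeniusAlgEquivOfAlgebraic]
  exact Function.iterate_fixed hx _

theorem mem_range_algebraMap_of_orderOf_dvd {x : E} (hx : orderOf x ∣ Fintype.card F - 1) :
    x ∈ Set.range (algebraMap F E) := by
  refine mem_range_algebraMap_of_pow_card_eq ?_
  rw [← Nat.sub_add_cancel Fintype.card_pos, pow_succ, orderOf_dvd_iff_pow_eq_one.mp hx, one_mul]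

theorem trace_eq_zero_of_pow_card_pow_eq_algebraMap_mul {x : E} {z : F} (hz : z ≠ 1) (m : ℕ)
    (h : x ^ Fintype.card F ^ m = algebraMap F E z * x) : Algebra.trace F E x = 0 := by
  have hfix : z * Algebra.trace F E x = Algebra.trace F E x := by
    rw [← smul_eq_mul, ← map_smul, Algebra.smul_def, ← h, trace_pow_card_pow]
  have : (z - 1) * Algebra.trace F E x = 0 := by rw [sub_mul, one_mul, hfix, sub_self]
  exact (mul_eq_zero.mp this).resolve_left (sub_ne_zero.mpr hz)

theorem trace_eq_zero_of_orderOf_eq_prime_pow {ℓ j : ℕ} (hℓ : ℓ.Prime) (hodd : Odd ℓ)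
    (hℓq : ℓ ∣ Fintype.card F - 1) {u : E} (hu : orderOf u = ℓ ^ j)
    (hF : u ∉ Set.range (algebraMap F E)) : Algebra.trace F E u = 0 := by
  have : Fact ℓ.Prime := ⟨hℓ⟩
  set q := Fintype.card F
  have hq : 1 < q := Fintype.one_lt_card
  have hj : ¬ ℓ ^ j ∣ q - 1 := fun h => hF (mem_range_algebraMap_of_orderOf_dvd (hu ▸ h))
  have hv : 1 ≤ padicValNat ℓ (q - 1) := one_le_padicValNat_of_dvd (Nat.sub_ne_zero_of_lt hq) hℓq
  have hvj : padicValNat ℓ (q - 1) ≤ j - 1 := by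
    have := mt (padicValNat_dvd_iff_le (Nat.sub_ne_zero_of_lt hq)).mpr hj
    omega
  obtain ⟨m, hm⟩ := exists_padicValNat_pow_sub_one_eq hℓ hodd hq hℓq hvj
  have hqm : q ^ m - 1 ≠ 0 := by
    intro h
    rw [h, padicValNat_zero_right] at hm
    omega
  have hdvd : ℓ ^ (j - 1) ∣ q ^ m - 1 := (padicValNat_dvd_iff_le hqm).mpr hm.ge
  have hndvd : ¬ ℓ ^ j ∣ q ^ m - 1 := fun h => by
    have := (padicValNat_dvd_iff_le hqm).mp h
    omega
  set ζ := u ^ (q ^ m - 1) with hζdef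
  have hζ : ζ ≠ 1 := fun h => hndvd (hu ▸ orderOf_dvd_of_pow_eq_one h)
  have hζℓ : ζ ^ ℓ = 1 := by
    rw [← pow_mul, ← orderOf_dvd_iff_pow_eq_one, hu, ← pow_sub_one_mul (by omega : j ≠ 0)]
    exact mul_dvd_mul_right hdvd ℓ
  obtain ⟨z, hz⟩ := mem_range_algebraMap_of_orderOf_dvd (F := F)
    ((orderOf_dvd_of_pow_eq_one hζℓ).trans hℓq)
  refine trace_eq_zero_of_pow_card_pow_eq_algebraMap_mul (z := z) (fun h => hζ ?_) m ?_
  · rw [← hz, h, map_one]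
  · rw [hz, hζdef, ← pow_succ, Nat.sub_add_cancel (Nat.one_le_pow _ _ (by omega))]

end FiniteField

theorem stmt7_general (ℓ : ℕ) (hℓ : ℓ.Prime) (hodd : Odd ℓ)
    (F E : Type*) [Field F] [Field E] [Algebra F E] [Fintype F] [Fintype E]
    (s : ℕ) (hs : 1 ≤ s)
    (hdvd : ℓ ^ s ∣ Fintype.card F - 1)
    (t : ℕ) (hdeg : Module.finrank F E = ℓ ^ t)
    (u : Eˣ) (hu : ∃ j : ℕ, orderOf u = ℓ ^ j) :
    (∀ x : F, algebraMap F E x = (u : E) →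
      Algebra.trace F E (u : E) = (ℓ : F) ^ t * x) ∧
    ((u : E) ∉ Set.range (algebraMap F E) → Algebra.trace F E (u : E) = 0) := by
  refine ⟨fun x hx => ?_, fun hF => ?_⟩
  · rw [← hx, Algebra.trace_algebraMap, hdeg, nsmul_eq_mul, Nat.cast_pow]
  · obtain ⟨j, hj⟩ := hu
    exact FiniteField.trace_eq_zero_of_orderOf_eq_prime_pow hℓ hodd
      ((dvd_pow_self ℓ (by omega)).trans hdvd) (orderOf_units.trans hj) hF

theorem stmt7 (p ℓ : ℕ) (hp : p.Prime) (hℓ : ℓ.Prime) (hne : p ≠ ℓ) (hodd : Odd ℓ)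
    (F E : Type*) [Field F] [Field E] [Algebra F E] [Fintype F] [Fintype E]
    [CharP F p]
    (s : ℕ) (hs : 1 ≤ s)
    (hdvd : ℓ ^ s ∣ Fintype.card F - 1) (hndvd : ¬ ℓ ^ (s + 1) ∣ Fintype.card F - 1)
    (t : ℕ) (hdeg : Module.finrank F E = ℓ ^ t)
    (u : Eˣ) (hu : ∃ j : ℕ, orderOf u = ℓ ^ j) :
    (∀ x : F, algebraMap F E x = (u : E) →
      Algebra.trace F E (u : E) = (ℓ : F) ^ t * x) ∧
    ((u : E) ∉ Set.range (algebraMap F E) → Algebra.trace F E (u : E) = 0) :=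
  stmt7_general ℓ hℓ hodd F E s hs hdvd t hdeg u hu
end
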